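/- Fix an integer d ≥ 2, let ρ, a¹, …, a^{d−2} : ℝ^d → ℝ be smooth, and for smooth f, g : ℝ^d → ℝ define {f,g}_d(x) = ρ(x)·det J(x), where J(x) is the d×d matrix whose rows are the gradients at x of f, g, a¹, …, a^{d−2}. Then the bracket satisfies the Jacobi identity: for all smooth f, g, h : ℝ^d → ℝ and all x ∈ ℝ^d, {{f,g}_d, h}_d(x) + {{g,h}_d, f}_d(x) + {{h,f}_d, g}_d(x) = 0; i.e., the Nambu-determinant bracket on ℝ^d is a Poisson bracket for every d. -/

import Mathlib

noncomputable section

/-- Partial derivative `∂f/∂x^i` at `x`. -/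
def pd {d : ℕ} (f : (Fin d → ℝ) → ℝ) (i : Fin d) (x : Fin d → ℝ) : ℝ :=
  fderiv ℝ f x (Pi.single i 1)

namespace NJ
open Matrix Finset

variable {n : ℕ}

/-- matrix with rows u, v, A 0, ..., A (n-1) -/
def Dm (A : Fin n → Fin (n+2) → ℝ) (u v : Fin (n+2) → ℝ) : Matrix (Fin (n+2)) (Fin (n+2)) ℝ :=
  Matrix.of fun p q =>
    if h0 : (p : ℕ) = 0 then u q
    else if h1 : (p : ℕ) = 1 then v q
    else A ⟨(p:ℕ)-2, by have := p.isLt; omega⟩ q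

def DD (A : Fin n → Fin (n+2) → ℝ) (u v : Fin (n+2) → ℝ) : ℝ := (Dm A u v).det

lemma Dm_zero (A : Fin n → Fin (n+2) → ℝ) (u v : Fin (n+2) → ℝ) : Dm A u v 0 = u := by
  funext q; simp [Dm]

lemma Dm_one (A : Fin n → Fin (n+2) → ℝ) (u v : Fin (n+2) → ℝ) : Dm A u v 1 = v := by
  funext q; simp [Dm]

lemma Dm_two (A : Fin n → Fin (n+2) → ℝ) (u v : Fin (n+2) → ℝ) (l : Fin n) :
    Dm A u v l.succ.succ = A l := by
  funext q
  have h : ((l.succ.succ : Fin (n+2)) : ℕ) = (l : ℕ) + 2 := by simp [Fin.val_succ]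
  simp only [Dm, Matrix.of_apply, h]
  rw [dif_neg (by omega), dif_neg (by omega)]
  congr 1

lemma fin_three (p : Fin (n+2)) : p = 0 ∨ p = 1 ∨ ∃ l : Fin n, p = l.succ.succ := by
  rcases Nat.lt_or_ge (p : ℕ) 2 with h | h
  · interval_cases hp : (p : ℕ)
    · exact Or.inl (by ext; simp [hp])
    · exact Or.inr (Or.inl (by ext; simp [hp]))
  · refine Or.inr (Or.inr ⟨⟨(p:ℕ) - 2, by have := p.isLt; omega⟩, ?_⟩)
    ext
    simp [Fin.val_succ]
    omega

lemma Dm_eq (A : Fin n → Fin (n+2) → ℝ) (u v : Fin (n+2) → ℝ)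
    (M : Matrix (Fin (n+2)) (Fin (n+2)) ℝ)
    (h0 : M 0 = u) (h1 : M 1 = v) (h2 : ∀ l : Fin n, M l.succ.succ = A l) :
    M = Dm A u v := by
  ext p q
  rcases fin_three p with rfl | rfl | ⟨l, rfl⟩
  · rw [Dm_zero]; rw [h0]
  · rw [Dm_one]; rw [h1]
  · rw [Dm_two]; rw [h2]

lemma one_ne_zero_fin : (1 : Fin (n+2)) ≠ 0 := by simp [Fin.ext_iff]
lemma ssucc_ne_zero (l : Fin n) : (l.succ.succ : Fin (n+2)) ≠ 0 := Fin.succ_ne_zero _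
lemma ssucc_ne_one (l : Fin n) : (l.succ.succ : Fin (n+2)) ≠ 1 := by
  simp [Fin.ext_iff, Fin.val_succ]

lemma upd0 (A : Fin n → Fin (n+2) → ℝ) (u v u' : Fin (n+2) → ℝ) :
    (Dm A u v).updateRow 0 u' = Dm A u' v := by
  refine Dm_eq _ _ _ _ (by simp) ?_ ?_
  · rw [Matrix.updateRow_ne one_ne_zero_fin, Dm_one]
  · intro l; rw [Matrix.updateRow_ne (ssucc_ne_zero l), Dm_two]

lemma upd1 (A : Fin n → Fin (n+2) → ℝ) (u v v' : Fin (n+2) → ℝ) :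
    (Dm A u v).updateRow 1 v' = Dm A u v' := by
  refine Dm_eq _ _ _ _ ?_ (by simp) ?_
  · rw [Matrix.updateRow_ne one_ne_zero_fin.symm, Dm_zero]
  · intro l; rw [Matrix.updateRow_ne (ssucc_ne_one l), Dm_two]

lemma upd2 (A : Fin n → Fin (n+2) → ℝ) (u v z : Fin (n+2) → ℝ) (l : Fin n) :
    (Dm A u v).updateRow l.succ.succ z = Dm (Function.update A l z) u v := by
  refine Dm_eq _ _ _ _ ?_ ?_ ?_
  · rw [Matrix.updateRow_ne (ssucc_ne_zero l).symm, Dm_zero]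
  · rw [Matrix.updateRow_ne (ssucc_ne_one l).symm, Dm_one]
  · intro m
    by_cases hm : m = l
    · subst hm; rw [Matrix.updateRow_self, Function.update_self]
    · rw [Matrix.updateRow_ne (by simpa [Fin.ext_iff, Fin.val_succ] using fun h => hm (Fin.ext h)),
        Dm_two, Function.update_of_ne hm]

-- linearity in u slot
lemma DD_add_u (A : Fin n → Fin (n+2) → ℝ) (u u' v : Fin (n+2) → ℝ) :
    DD A (u + u') v = DD A u v + DD A u' v := by
  unfold DD
  rw [← upd0 A u v (u + u'), Matrix.det_updateRow_add, upd0, upd0]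

lemma DD_smul_u (A : Fin n → Fin (n+2) → ℝ) (c : ℝ) (u v : Fin (n+2) → ℝ) :
    DD A (c • u) v = c * DD A u v := by
  unfold DD
  rw [← upd0 A u v (c • u), Matrix.det_updateRow_smul, upd0]

lemma DD_add_v (A : Fin n → Fin (n+2) → ℝ) (u v v' : Fin (n+2) → ℝ) :
    DD A u (v + v') = DD A u v + DD A u v' := by
  unfold DD
  rw [← upd1 A u v (v + v'), Matrix.det_updateRow_add, upd1, upd1]

lemma DD_smul_v (A : Fin n → Fin (n+2) → ℝ) (c : ℝ) (u v : Fin (n+2) → ℝ) :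
    DD A u (c • v) = c * DD A u v := by
  unfold DD
  rw [← upd1 A u v (c • v), Matrix.det_updateRow_smul, upd1]

lemma DD_add_A (A : Fin n → Fin (n+2) → ℝ) (l : Fin n) (z z' : Fin (n+2) → ℝ)
    (u v : Fin (n+2) → ℝ) :
    DD (Function.update A l (z + z')) u v
      = DD (Function.update A l z) u v + DD (Function.update A l z') u v := by
  unfold DD
  rw [← upd2 A u v (z + z') l, Matrix.det_updateRow_add, upd2, upd2]

lemma DD_smul_A (A : Fin n → Fin (n+2) → ℝ) (l : Fin n) (c : ℝ) (z : Fin (n+2) → ℝ)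
    (u v : Fin (n+2) → ℝ) :
    DD (Function.update A l (c • z)) u v = c * DD (Function.update A l z) u v := by
  unfold DD
  rw [← upd2 A u v (c • z) l, Matrix.det_updateRow_smul, upd2]

-- vanishing
lemma DD_zero_u (A : Fin n → Fin (n+2) → ℝ) (v : Fin (n+2) → ℝ) : DD A 0 v = 0 := by
  apply Matrix.det_eq_zero_of_row_eq_zero (0 : Fin (n+2))
  intro j; rw [show (Dm A 0 v 0 : Fin (n+2) → ℝ) = 0 from Dm_zero _ _ _]; rfl

lemma DD_zero_v (A : Fin n → Fin (n+2) → ℝ) (u : Fin (n+2) → ℝ) : DD A u 0 = 0 := by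
  apply Matrix.det_eq_zero_of_row_eq_zero (1 : Fin (n+2))
  intro j; rw [show (Dm A u 0 1 : Fin (n+2) → ℝ) = 0 from Dm_one _ _ _]; rfl

lemma DD_swap (A : Fin n → Fin (n+2) → ℝ) (u v : Fin (n+2) → ℝ) :
    DD A u v = - DD A v u := by
  have hM : Dm A u v = (Dm A v u).submatrix (Equiv.swap (0 : Fin (n+2)) 1) id := by
    refine (Dm_eq _ _ _ _ ?_ ?_ ?_).symm
    · show Dm A v u (Equiv.swap (0 : Fin (n+2)) 1 0) = u
      rw [Equiv.swap_apply_left, Dm_one]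
    · show Dm A v u (Equiv.swap (0 : Fin (n+2)) 1 1) = v
      rw [Equiv.swap_apply_right, Dm_zero]
    · intro l
      show Dm A v u (Equiv.swap (0 : Fin (n+2)) 1 l.succ.succ) = A l
      rw [Equiv.swap_apply_of_ne_of_ne (ssucc_ne_zero l) (ssucc_ne_one l), Dm_two]
  unfold DD
  rw [hM, Matrix.det_permute, Equiv.Perm.sign_swap (one_ne_zero_fin.symm)]
  simp

lemma DD_eq_rows (A : Fin n → Fin (n+2) → ℝ) (u : Fin (n+2) → ℝ) : DD A u u = 0 :=
  Matrix.det_zero_of_row_eq one_ne_zero_fin.symm (by rw [Dm_zero, Dm_one])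

lemma DD_rowA_v (A : Fin n → Fin (n+2) → ℝ) (u : Fin (n+2) → ℝ) (l : Fin n) :
    DD A u (A l) = 0 :=
  Matrix.det_zero_of_row_eq (ssucc_ne_one l).symm (by rw [Dm_one, Dm_two])

lemma DD_rowA_u (A : Fin n → Fin (n+2) → ℝ) (v : Fin (n+2) → ℝ) (l : Fin n) :
    DD A (A l) v = 0 :=
  Matrix.det_zero_of_row_eq (ssucc_ne_zero l).symm (by rw [Dm_zero, Dm_two])

-- finset sums
lemma DD_sum_u {α : Type*} (s : Finset α) (g : α → Fin (n+2) → ℝ)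
    (A : Fin n → Fin (n+2) → ℝ) (v : Fin (n+2) → ℝ) :
    DD A (∑ i ∈ s, g i) v = ∑ i ∈ s, DD A (g i) v := by
  classical
  induction s using Finset.induction_on with
  | empty => simpa using DD_zero_u A v
  | insert _ _ hnotmem ih =>
      rw [Finset.sum_insert hnotmem, DD_add_u, ih, Finset.sum_insert hnotmem]

lemma DD_sum_v {α : Type*} (s : Finset α) (g : α → Fin (n+2) → ℝ)
    (A : Fin n → Fin (n+2) → ℝ) (u : Fin (n+2) → ℝ) :
    DD A u (∑ i ∈ s, g i) = ∑ i ∈ s, DD A u (g i) := by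
  classical
  induction s using Finset.induction_on with
  | empty => simpa using DD_zero_v A u
  | insert _ _ hnotmem ih =>
      rw [Finset.sum_insert hnotmem, DD_add_v, ih, Finset.sum_insert hnotmem]

lemma vec_decomp (ξ : Fin (n+2) → ℝ) :
    ξ = ∑ q : Fin (n+2), ξ q • (Pi.single q 1 : Fin (n+2) → ℝ) := by
  funext j
  rw [Finset.sum_apply]
  simp [Pi.single_apply, Finset.sum_ite_eq', mul_comm]

lemma DD_expand_u (A : Fin n → Fin (n+2) → ℝ) (ξ v : Fin (n+2) → ℝ) :
    DD A ξ v = ∑ q : Fin (n+2), ξ q * DD A (Pi.single q 1) v := by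
  conv_lhs => rw [vec_decomp ξ, DD_sum_u]
  exact Finset.sum_congr rfl fun q _ => DD_smul_u A (ξ q) _ v

lemma DD_expand_v (A : Fin n → Fin (n+2) → ℝ) (u ξ : Fin (n+2) → ℝ) :
    DD A u ξ = ∑ q : Fin (n+2), ξ q * DD A u (Pi.single q 1) := by
  conv_lhs => rw [vec_decomp ξ, DD_sum_v]
  exact Finset.sum_congr rfl fun q _ => DD_smul_v A (ξ q) u _

-- Cramer-type dependence identity
lemma cramer_aux {m : ℕ} (z : Fin (m+1) → Fin m → ℝ) (j : Fin m) :
    ∑ i : Fin (m+1), (-1:ℝ)^(i:ℕ) * z i j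
        * (Matrix.of fun p q => z (i.succAbove p) q).det = 0 := by
  classical
  set B : Matrix (Fin (m+1)) (Fin (m+1)) ℝ :=
    Matrix.of fun i k => (Fin.cons (z i j) (z i) : Fin (m+1) → ℝ) k with hB
  have hB0 : B.det = 0 := by
    apply Matrix.det_zero_of_column_eq (show (0 : Fin (m+1)) ≠ j.succ from (Fin.succ_ne_zero j).symm)
    intro k
    simp [hB, Fin.cons_zero, Fin.cons_succ]
  have hexp := Matrix.det_succ_column_zero B
  rw [hB0] at hexp
  rw [← hexp.symm]
  apply Finset.sum_congr rfl
  intro i _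
  have h1 : B i 0 = z i j := by simp [hB]
  have h2 : B.submatrix i.succAbove Fin.succ = Matrix.of fun p q => z (i.succAbove p) q := by
    ext p q
    simp [hB, Fin.cons_succ]
  rw [h1, h2]

lemma cramer_DD (A : Fin n → Fin (n+2) → ℝ) (z : Fin (n+3) → Fin (n+2) → ℝ)
    (u : Fin (n+2) → ℝ) :
    ∑ i : Fin (n+3), (-1:ℝ)^(i:ℕ) * DD A u (z i)
        * (Matrix.of fun p q => z (i.succAbove p) q).det = 0 := by
  have key : ∀ j : Fin (n+2), ∑ i : Fin (n+3), (-1:ℝ)^(i:ℕ) * z i j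
      * (Matrix.of fun p q => z (i.succAbove p) q).det = 0 := fun j => cramer_aux z j
  calc ∑ i : Fin (n+3), (-1:ℝ)^(i:ℕ) * DD A u (z i)
        * (Matrix.of fun p q => z (i.succAbove p) q).det
      = ∑ i : Fin (n+3), ∑ j : Fin (n+2), DD A u (Pi.single j 1) * ((-1:ℝ)^(i:ℕ) * z i j
          * (Matrix.of fun p q => z (i.succAbove p) q).det) := by
        apply Finset.sum_congr rfl
        intro i _
        rw [DD_expand_v A u (z i), Finset.mul_sum, Finset.sum_mul]
        apply Finset.sum_congr rfl
        intro j _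
        ring
    _ = ∑ j : Fin (n+2), DD A u (Pi.single j 1) * ∑ i : Fin (n+3), ((-1:ℝ)^(i:ℕ) * z i j
          * (Matrix.of fun p q => z (i.succAbove p) q).det) := by
        rw [Finset.sum_comm]
        exact Finset.sum_congr rfl fun j _ => (Finset.mul_sum _ _ _).symm
    _ = 0 := by simp [key]

lemma sum_fin3 (f : Fin (n+3) → ℝ) :
    ∑ i, f i = f 0 + f ((0:Fin (n+2)).succ) + f (((0:Fin (n+1)).succ).succ)
      + ∑ k : Fin n, f k.succ.succ.succ := by
  rw [Fin.sum_univ_succ, Fin.sum_univ_succ, Fin.sum_univ_succ]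
  ring

/-- The `z` used for the Cramer-type relation. -/
def zz (A' : Fin n → Fin (n+2) → ℝ) (y u' v' : Fin (n+2) → ℝ) : Fin (n+3) → Fin (n+2) → ℝ :=
  Fin.cons y (fun p => Dm A' u' v' p)

lemma zz_zero (A' : Fin n → Fin (n+2) → ℝ) (y u' v' : Fin (n+2) → ℝ) :
    zz A' y u' v' 0 = y := rfl

lemma zz_succ (A' : Fin n → Fin (n+2) → ℝ) (y u' v' : Fin (n+2) → ℝ) (p : Fin (n+2)) :
    zz A' y u' v' p.succ = Dm A' u' v' p := by
  simp [zz]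

lemma det0 (A' : Fin n → Fin (n+2) → ℝ) (y u' v' : Fin (n+2) → ℝ) :
    (Matrix.of fun p q => zz A' y u' v' ((0 : Fin (n+3)).succAbove p) q)
      = Dm A' u' v' := by
  ext p q
  simp only [Matrix.of_apply]
  rw [Fin.zero_succAbove, zz_succ]

lemma det1 (A' : Fin n → Fin (n+2) → ℝ) (y u' v' : Fin (n+2) → ℝ) :
    (Matrix.of fun p q => zz A' y u' v' (((0:Fin (n+2)).succ).succAbove p) q)
      = Dm A' y v' := by
  refine Dm_eq _ _ _ _ ?_ ?_ ?_
  · funext q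
    simp only [Matrix.of_apply, Fin.succ_succAbove_zero, zz_zero]
  · funext q
    have h1 : (1 : Fin (n+2)) = (0 : Fin (n+1)).succ := (Fin.succ_zero_eq_one).symm
    simp only [Matrix.of_apply, h1, Fin.succ_succAbove_succ, Fin.zero_succAbove, zz_succ]
    rw [Fin.succ_zero_eq_one, Dm_one]
  · intro l
    funext q
    simp only [Matrix.of_apply, Fin.succ_succAbove_succ, Fin.zero_succAbove, zz_succ]
    rw [Dm_two]

lemma det2 (A' : Fin n → Fin (n+2) → ℝ) (y u' v' : Fin (n+2) → ℝ) :
    (Matrix.of fun p q => zz A' y u' v' ((((0:Fin (n+1)).succ).succ).succAbove p) q)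
      = Dm A' y u' := by
  refine Dm_eq _ _ _ _ ?_ ?_ ?_
  · funext q
    simp only [Matrix.of_apply, Fin.succ_succAbove_zero, zz_zero]
  · funext q
    have h1 : (1 : Fin (n+2)) = (0 : Fin (n+1)).succ := (Fin.succ_zero_eq_one).symm
    simp only [Matrix.of_apply, h1, Fin.succ_succAbove_succ, Fin.succ_succAbove_zero, zz_succ]
    rw [Dm_zero]
  · intro l
    funext q
    simp only [Matrix.of_apply, Fin.succ_succAbove_succ, Fin.zero_succAbove, zz_succ]
    rw [Dm_two]

lemma cramer_eval (A A' : Fin n → Fin (n+2) → ℝ) (u y u' v' : Fin (n+2) → ℝ) :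
    DD A u y * DD A' u' v' - DD A u u' * DD A' y v' + DD A u v' * DD A' y u'
    + ∑ k : Fin n, (-1:ℝ)^((k:ℕ)+3) * DD A u (A' k)
        * (Matrix.of fun p q => zz A' y u' v' ((k.succ.succ.succ : Fin (n+3)).succAbove p) q).det
    = 0 := by
  have H := cramer_DD A (zz A' y u' v') u
  rw [sum_fin3] at H
  rw [det0, det1, det2] at H
  have e0 : ((0 : Fin (n+3)) : ℕ) = 0 := rfl
  have e1 : (((0:Fin (n+2)).succ : Fin (n+3)) : ℕ) = 1 := by simp
  have e2 : ((((0:Fin (n+1)).succ).succ : Fin (n+3)) : ℕ) = 2 := by simp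
  rw [e0, e1, e2] at H
  have hz1 : zz A' y u' v' ((0:Fin (n+2)).succ) = u' := by rw [zz_succ, Dm_zero]
  have hz2 : zz A' y u' v' (((0:Fin (n+1)).succ).succ) = v' := by
    rw [zz_succ, Fin.succ_zero_eq_one, Dm_one]
  rw [zz_zero, hz1, hz2] at H
  have hrest : ∀ k : Fin n, zz A' y u' v' k.succ.succ.succ = A' k := by
    intro k; rw [zz_succ, Dm_two]
  have hsum : (∑ k : Fin n, (-1:ℝ)^((k.succ.succ.succ : Fin (n+3)) : ℕ)
      * DD A u (zz A' y u' v' k.succ.succ.succ)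
      * (Matrix.of fun p q => zz A' y u' v' ((k.succ.succ.succ : Fin (n+3)).succAbove p) q).det)
      = ∑ k : Fin n, (-1:ℝ)^((k:ℕ)+3) * DD A u (A' k)
        * (Matrix.of fun p q => zz A' y u' v' ((k.succ.succ.succ : Fin (n+3)).succAbove p) q).det := by
    apply Finset.sum_congr rfl
    intro k _
    rw [hrest]
    have hv : ((k.succ.succ.succ : Fin (n+3)) : ℕ) = (k:ℕ)+3 := by
      simp [Fin.val_succ]
    rw [hv]
  rw [hsum] at H
  have hDD : ∀ (B : Fin n → Fin (n+2) → ℝ) (s t : Fin (n+2) → ℝ), (Dm B s t).det = DD B s t :=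
    fun _ _ _ => rfl
  rw [hDD, hDD, hDD] at H
  linear_combination H
lemma IA (A : Fin n → Fin (n+2) → ℝ) (u v r w : Fin (n+2) → ℝ) :
    DD A u v * DD A r w + DD A v w * DD A r u + DD A w u * DD A r v = 0 := by
  have H := cramer_eval A A u v r w
  have hz : ∀ k : Fin n, DD A u (A k) = 0 := fun k => DD_rowA_v A u k
  simp only [hz, mul_zero, zero_mul, Finset.sum_const_zero, add_zero] at H
  have s1 := DD_swap A r u
  have s2 := DD_swap A w u
  have s3 := DD_swap A r v
  linear_combination H + DD A v w * s1 + DD A r v * s2 - DD A u w * s3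

lemma IB (A : Fin n → Fin (n+2) → ℝ) (F : Fin (n+2) → Fin (n+2) → ℝ)
    (hF : ∀ p q, F p q = F q p) (v w : Fin (n+2) → ℝ) :
    DD A (fun j => DD A (F j) v) w = DD A (fun j => DD A (F j) w) v := by
  have expand : ∀ y z : Fin (n+2) → ℝ,
      DD A (fun j => DD A (F j) y) z
        = ∑ q : Fin (n+2), ∑ t : Fin (n+2),
            F q t * (DD A (Pi.single t 1) y * DD A (Pi.single q 1) z) := by
    intro y z
    rw [DD_expand_u A (fun j => DD A (F j) y) z]
    apply Finset.sum_congr rfl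
    intro q _
    rw [DD_expand_u A (F q) y, Finset.sum_mul]
    apply Finset.sum_congr rfl
    intro t _
    ring
  rw [expand v w, expand w v, Finset.sum_comm]
  apply Finset.sum_congr rfl
  intro q _
  apply Finset.sum_congr rfl
  intro t _
  rw [hF q t]
  ring

lemma DD_zero_A (A : Fin n → Fin (n+2) → ℝ) (l : Fin n) (u v : Fin (n+2) → ℝ) :
    DD (Function.update A l 0) u v = 0 := by
  apply Matrix.det_eq_zero_of_row_eq_zero (l.succ.succ)
  intro j
  rw [show (Dm (Function.update A l 0) u v l.succ.succ : Fin (n+2) → ℝ)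
      = Function.update A l 0 l from Dm_two _ _ _ l, Function.update_self]
  rfl

lemma DD_sum_A {α : Type*} (s : Finset α) (g : α → Fin (n+2) → ℝ)
    (A : Fin n → Fin (n+2) → ℝ) (l : Fin n) (u v : Fin (n+2) → ℝ) :
    DD (Function.update A l (∑ i ∈ s, g i)) u v
      = ∑ i ∈ s, DD (Function.update A l (g i)) u v := by
  classical
  induction s using Finset.induction_on with
  | empty => simpa using DD_zero_A A l u v
  | insert _ _ hnotmem ih =>
      rw [Finset.sum_insert hnotmem, DD_add_A, ih, Finset.sum_insert hnotmem]

lemma DD_expand_A (A : Fin n → Fin (n+2) → ℝ) (l : Fin n) (ξ u v : Fin (n+2) → ℝ) :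
    DD (Function.update A l ξ) u v
      = ∑ t : Fin (n+2), ξ t * DD (Function.update A l (Pi.single t 1)) u v := by
  conv_lhs => rw [vec_decomp ξ, DD_sum_A]
  exact Finset.sum_congr rfl fun t _ => DD_smul_A A l (ξ t) _ u v
lemma zz_indep (A : Fin n → Fin (n+2) → ℝ) (l : Fin n) (s s' u v w : Fin (n+2) → ℝ)
    (k : Fin (n+3)) (hk : k ≠ l.succ.succ.succ) :
    zz (Function.update A l s) u v w k = zz (Function.update A l s') u v w k := by
  induction k using Fin.cases with
  | zero => rfl
  | succ j =>
      rw [zz_succ, zz_succ]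
      have hj : j ≠ l.succ.succ := fun h => hk (by rw [h])
      rcases fin_three j with rfl | rfl | ⟨m, rfl⟩
      · rw [Dm_zero, Dm_zero]
      · rw [Dm_one, Dm_one]
      · have hm : m ≠ l := fun h => hj (by rw [h])
        rw [Dm_two, Dm_two, Function.update_of_ne hm, Function.update_of_ne hm]

def Rdet (A : Fin n → Fin (n+2) → ℝ) (l : Fin n) (u v w s : Fin (n+2) → ℝ) : ℝ :=
  (Matrix.of fun p r => zz (Function.update A l s) u v w
      ((l.succ.succ.succ : Fin (n+3)).succAbove p) r).det

lemma Rdet_indep (A : Fin n → Fin (n+2) → ℝ) (l : Fin n) (u v w s s' : Fin (n+2) → ℝ) :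
    Rdet A l u v w s = Rdet A l u v w s' := by
  unfold Rdet
  congr 1
  ext p r
  simp only [Matrix.of_apply]
  exact congrFun (zz_indep A l s s' u v w _ (Fin.succAbove_ne _ p)) r

lemma key_rel (A : Fin n → Fin (n+2) → ℝ) (l : Fin n) (u v w : Fin (n+2) → ℝ)
    (q t : Fin (n+2)) :
    DD (Function.update A l (Pi.single t 1)) u v * DD A (Pi.single q 1) w
    + DD (Function.update A l (Pi.single t 1)) v w * DD A (Pi.single q 1) u
    + DD (Function.update A l (Pi.single t 1)) w u * DD A (Pi.single q 1) v
    = -((-1:ℝ)^((l:ℕ)+3) * DD A (Pi.single q 1) (Pi.single t 1)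
        * Rdet A l u v w (Pi.single t 1)) := by
  have H := cramer_eval A (Function.update A l (Pi.single t 1)) (Pi.single q 1) u v w
  have hsum : (∑ k : Fin n, (-1:ℝ)^((k:ℕ)+3)
        * DD A (Pi.single q 1) (Function.update A l (Pi.single t 1) k)
        * (Matrix.of fun p r => zz (Function.update A l (Pi.single t 1)) u v w
            ((k.succ.succ.succ : Fin (n+3)).succAbove p) r).det)
      = (-1:ℝ)^((l:ℕ)+3) * DD A (Pi.single q 1) (Pi.single t 1)
          * Rdet A l u v w (Pi.single t 1) := by
    rw [Finset.sum_eq_single_of_mem l (Finset.mem_univ l)]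
    · rw [Function.update_self]; rfl
    · intro k _ hk
      rw [Function.update_of_ne hk, DD_rowA_v, mul_zero, zero_mul]
  rw [hsum] at H
  have hswap := DD_swap (Function.update A l (Pi.single t 1)) w u
  linear_combination H + DD A (Pi.single q 1) v * hswap

lemma IC (A : Fin n → Fin (n+2) → ℝ) (S : Fin (n+2) → Fin (n+2) → ℝ)
    (hS : ∀ p q, S p q = S q p) (l : Fin n) (u v w : Fin (n+2) → ℝ) :
    DD A (fun j => DD (Function.update A l (S j)) u v) w
    + DD A (fun j => DD (Function.update A l (S j)) v w) u
    + DD A (fun j => DD (Function.update A l (S j)) w u) v = 0 := by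
  have hterm : ∀ x y z : Fin (n+2) → ℝ,
      DD A (fun j => DD (Function.update A l (S j)) x y) z
        = ∑ q : Fin (n+2), ∑ t : Fin (n+2),
            S q t * (DD (Function.update A l (Pi.single t 1)) x y * DD A (Pi.single q 1) z) := by
    intro x y z
    rw [DD_expand_u A (fun j => DD (Function.update A l (S j)) x y) z]
    apply Finset.sum_congr rfl
    intro q _
    rw [DD_expand_A A l (S q) x y, Finset.sum_mul]
    apply Finset.sum_congr rfl
    intro t _
    ring
  rw [hterm u v w, hterm v w u, hterm w u v]
  rw [← Finset.sum_add_distrib, ← Finset.sum_add_distrib]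
  have hmerge : ∀ q : Fin (n+2),
      ((∑ t : Fin (n+2), S q t * (DD (Function.update A l (Pi.single t 1)) u v * DD A (Pi.single q 1) w))
        + ∑ t : Fin (n+2), S q t * (DD (Function.update A l (Pi.single t 1)) v w * DD A (Pi.single q 1) u))
        + ∑ t : Fin (n+2), S q t * (DD (Function.update A l (Pi.single t 1)) w u * DD A (Pi.single q 1) v)
      = ∑ t : Fin (n+2), (-(S q t * ((-1:ℝ)^((l:ℕ)+3) * DD A (Pi.single q 1) (Pi.single t 1)
          * Rdet A l u v w (Pi.single 0 1)))) := by
    intro q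
    rw [← Finset.sum_add_distrib, ← Finset.sum_add_distrib]
    apply Finset.sum_congr rfl
    intro t _
    have hk := key_rel A l u v w q t
    rw [Rdet_indep A l u v w (Pi.single t 1) (Pi.single 0 1)] at hk
    linear_combination (S q t) * hk
  rw [Finset.sum_congr rfl fun q _ => hmerge q]
  -- remaining: ∑ q ∑ t, -(S q t * ((-1)^(l+3) * ω q t * R)) = 0
  have hΨ : (∑ q : Fin (n+2), ∑ t : Fin (n+2), S q t * DD A (Pi.single q 1) (Pi.single t 1)) = 0 := by
    have h1 : (∑ q : Fin (n+2), ∑ t : Fin (n+2), S q t * DD A (Pi.single q 1) (Pi.single t 1))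
        = -(∑ q : Fin (n+2), ∑ t : Fin (n+2), S q t * DD A (Pi.single q 1) (Pi.single t 1)) := by
      conv_lhs => rw [Finset.sum_comm]
      rw [← Finset.sum_neg_distrib]
      apply Finset.sum_congr rfl
      intro q _
      rw [← Finset.sum_neg_distrib]
      apply Finset.sum_congr rfl
      intro t _
      rw [hS t q, DD_swap A (Pi.single t 1) (Pi.single q 1)]
      ring
    linarith
  calc (∑ q : Fin (n+2), ∑ t : Fin (n+2),
        -(S q t * ((-1:ℝ)^((l:ℕ)+3) * DD A (Pi.single q 1) (Pi.single t 1)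
          * Rdet A l u v w (Pi.single 0 1))))
      = (-((-1:ℝ)^((l:ℕ)+3) * Rdet A l u v w (Pi.single 0 1)))
        * ∑ q : Fin (n+2), ∑ t : Fin (n+2), S q t * DD A (Pi.single q 1) (Pi.single t 1) := by
        rw [Finset.mul_sum]
        apply Finset.sum_congr rfl
        intro q _
        rw [Finset.mul_sum]
        apply Finset.sum_congr rfl
        intro t _
        ring
    _ = 0 := by rw [hΨ, mul_zero]

end NJ

def detCML (m : ℕ) : ContinuousMultilinearMap ℝ (fun _ : Fin m => (Fin m → ℝ)) ℝ :=
  MultilinearMap.mkContinuous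
    (Matrix.detRowAlternating : (Fin m → ℝ) [⋀^Fin m]→ₗ[ℝ] ℝ).toMultilinearMap
    (Fintype.card (Equiv.Perm (Fin m)) : ℝ)
    (by
      intro M
      have h1 : (Matrix.detRowAlternating : (Fin m → ℝ) [⋀^Fin m]→ₗ[ℝ] ℝ).toMultilinearMap M
          = Matrix.det (Matrix.of M) := rfl
      rw [h1, Matrix.det_apply']
      refine (norm_sum_le _ _).trans ?_
      have hσ : ∀ σ : Equiv.Perm (Fin m),
          ‖(((Equiv.Perm.sign σ : ℤ) : ℝ)) * ∏ i, (Matrix.of M) (σ i) i‖ ≤ ∏ i, ‖M i‖ := by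
        intro σ
        rw [norm_mul]
        have hsgn : ‖(((Equiv.Perm.sign σ : ℤ) : ℝ))‖ = 1 := by
          rcases Int.units_eq_one_or (Equiv.Perm.sign σ) with h | h <;> rw [h] <;> norm_num
        rw [hsgn, one_mul]
        calc ‖∏ i, (Matrix.of M) (σ i) i‖ = ∏ i, ‖M (σ i) i‖ := by
              rw [norm_prod]
              rfl
          _ ≤ ∏ i, ‖M (σ i)‖ := by
              apply Finset.prod_le_prod (fun i _ => norm_nonneg _)
              intro i _
              exact norm_le_pi_norm (M (σ i)) i
          _ = ∏ i, ‖M i‖ := Equiv.prod_comp σ (fun p => ‖M p‖)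
      calc ∑ σ : Equiv.Perm (Fin m), ‖(((Equiv.Perm.sign σ : ℤ) : ℝ)) * ∏ i, (Matrix.of M) (σ i) i‖
          ≤ ∑ _σ : Equiv.Perm (Fin m), ∏ i, ‖M i‖ := Finset.sum_le_sum fun σ _ => hσ σ
        _ = (Fintype.card (Equiv.Perm (Fin m)) : ℝ) * ∏ i, ‖M i‖ := by
            rw [Finset.sum_const, Finset.card_univ, nsmul_eq_mul])

lemma detCML_apply {m : ℕ} (M : Fin m → Fin m → ℝ) :
    detCML m M = Matrix.det (Matrix.of M) := rfl

lemma pd_contDiff {d : ℕ} {f : (Fin d → ℝ) → ℝ} (hf : ContDiff ℝ (⊤ : ℕ∞) f) (i : Fin d) :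
    ContDiff ℝ (⊤ : ℕ∞) (pd f i) :=
  (hf.fderiv_right (by simp)).clm_apply contDiff_const

lemma pd_hasFDerivAt {d : ℕ} {f : (Fin d → ℝ) → ℝ} (hf : ContDiff ℝ (⊤ : ℕ∞) f) (x : Fin d → ℝ) :
    HasFDerivAt f (fderiv ℝ f x) x :=
  (hf.differentiable (by simp) x).hasFDerivAt

/-- симметрия second derivative -/
lemma pd_pd_symm {d : ℕ} {f : (Fin d → ℝ) → ℝ} (hf : ContDiff ℝ (⊤ : ℕ∞) f) (x : Fin d → ℝ)
    (i j : Fin d) : pd (pd f i) j x = pd (pd f j) i x := by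
  have hdf : ∀ y, HasFDerivAt f (fderiv ℝ f y) y := fun y =>
    (hf.differentiable (by simp) y).hasFDerivAt
  have h2 : DifferentiableAt ℝ (fderiv ℝ f) x :=
    ((hf.fderiv_right (m := (⊤ : ℕ∞)) (by simp)).differentiable (by simp)) x
  have key : ∀ a b : Fin d, pd (pd f a) b x
      = fderiv ℝ (fderiv ℝ f) x (Pi.single b 1) (Pi.single a 1) := by
    intro a b
    have hre : fderiv ℝ (fun y => (fderiv ℝ f y) (Pi.single a 1)) x
        = (fderiv ℝ f x).comp (fderiv ℝ (fun _ : (Fin d → ℝ) => (Pi.single a 1 : Fin d → ℝ)) x)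
          + (fderiv ℝ (fderiv ℝ f) x).flip (Pi.single a 1) :=
      fderiv_clm_apply h2 (differentiableAt_const _)
    calc pd (pd f a) b x
        = fderiv ℝ (fun y => (fderiv ℝ f y) (Pi.single a 1)) x (Pi.single b 1) := rfl
      _ = fderiv ℝ (fderiv ℝ f) x (Pi.single b 1) (Pi.single a 1) := by
          rw [hre]; simp
  rw [key i j, key j i]
  exact second_derivative_symmetric hdf h2.hasFDerivAt _ _
lemma pd_mul {d : ℕ} {F G : (Fin d → ℝ) → ℝ} {x : Fin d → ℝ}
    {F' G' : (Fin d → ℝ) →L[ℝ] ℝ}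
    (hF : HasFDerivAt F F' x) (hG : HasFDerivAt G G' x) (j : Fin d) :
    pd (fun y => F y * G y) j x = F' (Pi.single j 1) * G x + F x * G' (Pi.single j 1) := by
  rw [pd, show (fun y => F y * G y) = F * G from rfl, (hF.mul hG).fderiv]
  simp
  ring

lemma pd_det {m : ℕ} (g : Fin m → (Fin m → ℝ) → (Fin m → ℝ))
    (g' : Fin m → ((Fin m → ℝ) →L[ℝ] (Fin m → ℝ))) (x : Fin m → ℝ)
    (hg : ∀ p, HasFDerivAt (g p) (g' p) x) (j : Fin m) :
    pd (fun y => Matrix.det (Matrix.of fun p q => g p y q)) j x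
      = ∑ p : Fin m, Matrix.det
          ((Matrix.of fun p' q => g p' x q).updateRow p (g' p (Pi.single j 1))) := by
  classical
  have hcomp := HasFDerivAt.multilinear_comp (f := detCML m) (g := g) (g' := g') (x := x) hg
  have hfun : (fun y => Matrix.det (Matrix.of fun p q => g p y q))
      = fun y => detCML m (fun p => g p y) := by
    funext y; rfl
  rw [pd, hfun, hcomp.fderiv]
  rw [ContinuousLinearMap.sum_apply]
  apply Finset.sum_congr rfl
  intro p _
  rw [ContinuousLinearMap.comp_apply]
  have : (detCML m).toContinuousLinearMap (fun p' => g p' x) p (g' p (Pi.single j 1))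
      = detCML m (Function.update (fun p' => g p' x) p (g' p (Pi.single j 1))) := by
    simp [ContinuousMultilinearMap.toContinuousLinearMap]
  rw [this]
  rfl


/-- The Nambu-determinant bracket `{f,g}_d(x) = ρ(x) · det J(x)`, where `J(x)` is the
`d × d` Jacobian matrix whose rows are the gradients at `x` of
`f, g, a 0 = a¹, …, a (d-3) = a^{d-2}`.  For `d = 2` there are no Casimirs and the
bracket is `{f,g} = ρ·(∂f/∂x¹·∂g/∂x² − ∂f/∂x²·∂g/∂x¹)`. -/
def nambu {d : ℕ} (ρ : (Fin d → ℝ) → ℝ) (a : Fin (d - 2) → (Fin d → ℝ) → ℝ)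
    (f g : (Fin d → ℝ) → ℝ) (x : Fin d → ℝ) : ℝ :=
  ρ x * Matrix.det (Matrix.of fun p q : Fin d =>
    if h0 : (p : ℕ) = 0 then pd f q x
    else if h1 : (p : ℕ) = 1 then pd g q x
    else pd (a ⟨(p : ℕ) - 2, by have := p.isLt; omega⟩) q x)

namespace NJ
open Matrix Finset

section main
variable {n : ℕ} (ρ : (Fin (n+2) → ℝ) → ℝ) (a : Fin n → (Fin (n+2) → ℝ) → ℝ)

def G (f : (Fin (n+2) → ℝ) → ℝ) (x : Fin (n+2) → ℝ) : Fin (n+2) → ℝ := fun q => pd f q x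

def GA (x : Fin (n+2) → ℝ) : Fin n → Fin (n+2) → ℝ := fun l => G (a l) x

def Hm (f : (Fin (n+2) → ℝ) → ℝ) (x : Fin (n+2) → ℝ) : Fin (n+2) → Fin (n+2) → ℝ :=
  fun j q => pd (pd f q) j x

lemma Hm_symm {f : (Fin (n+2) → ℝ) → ℝ} (hf : ContDiff ℝ (⊤ : ℕ∞) f) (x : Fin (n+2) → ℝ) :
    ∀ p q, Hm f x p q = Hm f x q p := fun p q => pd_pd_symm hf x q p

lemma nambu_eq (f g : (Fin (n+2) → ℝ) → ℝ) (x : Fin (n+2) → ℝ) :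
    nambu ρ a f g x = ρ x * DD (GA a x) (G f x) (G g x) := rfl

def rowF (f g : (Fin (n+2) → ℝ) → ℝ) : Fin (n+2) → (Fin (n+2) → ℝ) → ℝ := fun p =>
  if h0 : (p : ℕ) = 0 then f
  else if h1 : (p : ℕ) = 1 then g
  else a ⟨(p:ℕ)-2, by have := p.isLt; omega⟩

lemma rowF_zero (f g : (Fin (n+2) → ℝ) → ℝ) : rowF a f g 0 = f := by
  unfold rowF
  rw [dif_pos (by simp)]

lemma rowF_one (f g : (Fin (n+2) → ℝ) → ℝ) : rowF a f g 1 = g := by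
  unfold rowF
  rw [dif_neg (by simp), dif_pos (by simp)]

lemma rowF_two (f g : (Fin (n+2) → ℝ) → ℝ) (l : Fin n) : rowF a f g l.succ.succ = a l := by
  unfold rowF
  have h : ((l.succ.succ : Fin (n+2)) : ℕ) = (l:ℕ)+2 := by simp [Fin.val_succ]
  rw [dif_neg (by omega), dif_neg (by omega)]
  congr 1

lemma G_rowF (f g : (Fin (n+2) → ℝ) → ℝ) (y : Fin (n+2) → ℝ) :
    (Matrix.of fun p q => G (rowF a f g p) y q : Matrix (Fin (n+2)) (Fin (n+2)) ℝ)
      = Dm (GA a y) (G f y) (G g y) := by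
  ext p q
  simp only [Matrix.of_apply, G, rowF, Dm]
  split_ifs <;> rfl

def Gder (f : (Fin (n+2) → ℝ) → ℝ) (x : Fin (n+2) → ℝ) :
    (Fin (n+2) → ℝ) →L[ℝ] (Fin (n+2) → ℝ) :=
  ContinuousLinearMap.pi fun q => fderiv ℝ (pd f q) x

lemma G_hasFDerivAt {f : (Fin (n+2) → ℝ) → ℝ} (hf : ContDiff ℝ (⊤ : ℕ∞) f) (x : Fin (n+2) → ℝ) :
    HasFDerivAt (G f) (Gder f x) x := by
  apply hasFDerivAt_pi.2
  intro q
  exact ((pd_contDiff hf q).differentiable (by simp) x).hasFDerivAt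

lemma Gder_single (f : (Fin (n+2) → ℝ) → ℝ) (x : Fin (n+2) → ℝ) (j : Fin (n+2)) :
    Gder f x (Pi.single j 1) = Hm f x j := by
  funext q
  simp only [Gder, ContinuousLinearMap.pi_apply, Hm]
  rfl

lemma pd_nambu {f g : (Fin (n+2) → ℝ) → ℝ}
    (hρ : ContDiff ℝ (⊤ : ℕ∞) ρ) (ha : ∀ l, ContDiff ℝ (⊤ : ℕ∞) (a l))
    (hf : ContDiff ℝ (⊤ : ℕ∞) f) (hg : ContDiff ℝ (⊤ : ℕ∞) g) (x : Fin (n+2) → ℝ) (j : Fin (n+2)) :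
    pd (nambu ρ a f g) j x
      = pd ρ j x * DD (GA a x) (G f x) (G g x)
        + ρ x * (DD (GA a x) (Hm f x j) (G g x)
            + DD (GA a x) (G f x) (Hm g x j)
            + ∑ l : Fin n, DD (Function.update (GA a x) l (Hm (a l) x j)) (G f x) (G g x)) := by
  classical
  have hrowsm : ∀ p, ContDiff ℝ (⊤ : ℕ∞) (rowF a f g p) := by
    intro p; unfold rowF; split_ifs; exacts [hf, hg, ha _]
  have hdet_pd : pd (fun y => Matrix.det (Matrix.of fun p q => G (rowF a f g p) y q)) j x
      = ∑ p : Fin (n+2), Matrix.det ((Matrix.of fun p' q => G (rowF a f g p') x q).updateRow p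
          (Gder (rowF a f g p) x (Pi.single j 1))) :=
    pd_det (fun p => G (rowF a f g p)) (fun p => Gder (rowF a f g p) x) x
      (fun p => G_hasFDerivAt (hrowsm p) x) j
  have hterm : ∀ p : Fin (n+2),
      Matrix.det ((Matrix.of fun p' q => G (rowF a f g p') x q).updateRow p
          (Gder (rowF a f g p) x (Pi.single j 1)))
        = Matrix.det ((Dm (GA a x) (G f x) (G g x)).updateRow p
            (Gder (rowF a f g p) x (Pi.single j 1))) := by
    intro p
    rw [G_rowF]
  have hsum : (∑ p : Fin (n+2), Matrix.det ((Matrix.of fun p' q => G (rowF a f g p') x q).updateRow p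
          (Gder (rowF a f g p) x (Pi.single j 1))))
      = DD (GA a x) (Hm f x j) (G g x) + DD (GA a x) (G f x) (Hm g x j)
        + ∑ l : Fin n, DD (Function.update (GA a x) l (Hm (a l) x j)) (G f x) (G g x) := by
    have hDD : ∀ (B : Fin n → Fin (n+2) → ℝ) (s t : Fin (n+2) → ℝ), (Dm B s t).det = DD B s t :=
      fun _ _ _ => rfl
    rw [Finset.sum_congr rfl fun p _ => hterm p]
    rw [Fin.sum_univ_succ, Fin.sum_univ_succ]
    rw [rowF_zero, Gder_single, upd0, hDD]
    rw [Fin.succ_zero_eq_one, rowF_one, Gder_single, upd1, hDD]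
    have hl : ∀ l : Fin n,
        ((Dm (GA a x) (G f x) (G g x)).updateRow l.succ.succ
            ((Gder (rowF a f g l.succ.succ) x) (Pi.single j 1))).det
          = DD (Function.update (GA a x) l (Hm (a l) x j)) (G f x) (G g x) := by
      intro l
      rw [rowF_two, Gder_single, upd2, hDD]
    rw [Finset.sum_congr rfl fun l _ => hl l]
    ring
  -- product rule
  have hcomp := HasFDerivAt.multilinear_comp (f := detCML (n+2))
      (g := fun p => G (rowF a f g p)) (g' := fun p => Gder (rowF a f g p) x) (x := x)
      (fun p => G_hasFDerivAt (hrowsm p) x)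
  have hfun : (fun y => Matrix.det (Matrix.of fun p q => G (rowF a f g p) y q))
      = fun y => detCML (n+2) (fun p => G (rowF a f g p) y) := funext fun y => rfl
  have hdiff : HasFDerivAt (fun y => Matrix.det (Matrix.of fun p q => G (rowF a f g p) y q))
      (fderiv ℝ (fun y => Matrix.det (Matrix.of fun p q => G (rowF a f g p) y q)) x) x := by
    rw [hfun]
    exact hcomp.differentiableAt.hasFDerivAt
  have hnf : nambu ρ a f g
      = fun y => ρ y * Matrix.det (Matrix.of fun p q => G (rowF a f g p) y q) := by
    funext y
    rw [nambu_eq ρ a f g y]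
    congr 1
    rw [G_rowF]
    rfl
  rw [hnf, pd_mul (pd_hasFDerivAt hρ x) hdiff j]
  have h1 : fderiv ℝ ρ x (Pi.single j 1) = pd ρ j x := rfl
  have h2 : (fderiv ℝ (fun y => Matrix.det (Matrix.of fun p q => G (rowF a f g p) y q)) x)
      (Pi.single j 1)
      = pd (fun y => Matrix.det (Matrix.of fun p q => G (rowF a f g p) y q)) j x := rfl
  rw [h1, h2, hdet_pd, hsum]
  have h3 : Matrix.det (Matrix.of fun p q => G (rowF a f g p) x q)
      = DD (GA a x) (G f x) (G g x) := by
    rw [G_rowF]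
    rfl
  rw [h3]

end main
end NJ
namespace NJ
open Matrix Finset

section final
variable {n : ℕ} (ρ : (Fin (n+2) → ℝ) → ℝ) (a : Fin n → (Fin (n+2) → ℝ) → ℝ)

lemma DD_neg_u (A : Fin n → Fin (n+2) → ℝ) (ξ v : Fin (n+2) → ℝ) :
    DD A (-ξ) v = - DD A ξ v := by
  have e : (-ξ) = (-1 : ℝ) • ξ := by funext q; simp
  rw [e, DD_smul_u]
  ring

lemma nambu_nambu {f g h : (Fin (n+2) → ℝ) → ℝ}
    (hρ : ContDiff ℝ (⊤ : ℕ∞) ρ) (ha : ∀ l, ContDiff ℝ (⊤ : ℕ∞) (a l))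
    (hf : ContDiff ℝ (⊤ : ℕ∞) f) (hg : ContDiff ℝ (⊤ : ℕ∞) g) (hh : ContDiff ℝ (⊤ : ℕ∞) h) (x : Fin (n+2) → ℝ) :
    nambu ρ a (nambu ρ a f g) h x
      = ρ x * (DD (GA a x) (G f x) (G g x) * DD (GA a x) (G ρ x) (G h x))
        + ρ x * ρ x * ( DD (GA a x) (fun j => DD (GA a x) (Hm f x j) (G g x)) (G h x)
          + DD (GA a x) (fun j => DD (GA a x) (G f x) (Hm g x j)) (G h x)
          + ∑ l : Fin n, DD (GA a x)
              (fun j => DD (Function.update (GA a x) l (Hm (a l) x j)) (G f x) (G g x)) (G h x) ) := by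
  classical
  rw [nambu_eq ρ a (nambu ρ a f g) h x]
  have hG : G (nambu ρ a f g) x = (DD (GA a x) (G f x) (G g x)) • (G ρ x)
      + ρ x • ((fun j => DD (GA a x) (Hm f x j) (G g x))
        + ((fun j => DD (GA a x) (G f x) (Hm g x j))
        + (fun j => ∑ l : Fin n,
            DD (Function.update (GA a x) l (Hm (a l) x j)) (G f x) (G g x)))) := by
    funext j
    have : G (nambu ρ a f g) x j = pd (nambu ρ a f g) j x := rfl
    rw [this, pd_nambu ρ a hρ ha hf hg x j]
    simp only [Pi.add_apply, Pi.smul_apply, smul_eq_mul]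
    have : G ρ x j = pd ρ j x := rfl
    rw [this]
    ring
  rw [hG, DD_add_u, DD_smul_u, DD_smul_u, DD_add_u, DD_add_u]
  have hswap3 : (fun j => ∑ l : Fin n,
      DD (Function.update (GA a x) l (Hm (a l) x j)) (G f x) (G g x))
      = ∑ l : Fin n, (fun j =>
          DD (Function.update (GA a x) l (Hm (a l) x j)) (G f x) (G g x)) := by
    funext j
    rw [Finset.sum_apply]
  rw [hswap3, DD_sum_u]
  ring

lemma jacobi_main {f g h : (Fin (n+2) → ℝ) → ℝ}
    (hρ : ContDiff ℝ (⊤ : ℕ∞) ρ) (ha : ∀ l, ContDiff ℝ (⊤ : ℕ∞) (a l))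
    (hf : ContDiff ℝ (⊤ : ℕ∞) f) (hg : ContDiff ℝ (⊤ : ℕ∞) g) (hh : ContDiff ℝ (⊤ : ℕ∞) h) (x : Fin (n+2) → ℝ) :
    nambu ρ a (nambu ρ a f g) h x + nambu ρ a (nambu ρ a g h) f x +
      nambu ρ a (nambu ρ a h f) g x = 0 := by
  classical
  rw [nambu_nambu ρ a hρ ha hf hg hh x, nambu_nambu ρ a hρ ha hg hh hf x,
    nambu_nambu ρ a hρ ha hh hf hg x]
  set A := GA a x
  set u := G f x
  set v := G g x
  set w := G h x
  set r := G ρ x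
  set Ff := Hm f x
  set Gg := Hm g x
  set Hh := Hm h x
  have hIA := IA A u v r w
  have hFsym : ∀ p q, Ff p q = Ff q p := Hm_symm hf x
  have hGsym : ∀ p q, Gg p q = Gg q p := Hm_symm hg x
  have hHsym : ∀ p q, Hh p q = Hh q p := Hm_symm hh x
  have hF : DD A (fun j => DD A (Ff j) v) w = DD A (fun j => DD A (Ff j) w) v :=
    IB A Ff hFsym v w
  have hG1 : DD A (fun j => DD A (Gg j) w) u = DD A (fun j => DD A (Gg j) u) w :=
    IB A Gg hGsym w u
  have hH1 : DD A (fun j => DD A (Hh j) u) v = DD A (fun j => DD A (Hh j) v) u :=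
    IB A Hh hHsym u v
  have hswapneg : ∀ (F : Fin (n+2) → Fin (n+2) → ℝ) (y z : Fin (n+2) → ℝ),
      DD A (fun j => DD A y (F j)) z = - DD A (fun j => DD A (F j) y) z := by
    intro F y z
    have e : (fun j => DD A y (F j)) = -(fun j => DD A (F j) y) := by
      funext j
      simp only [Pi.neg_apply]
      exact DD_swap A y (F j)
    rw [e, DD_neg_u]
  have hF2 : DD A (fun j => DD A w (Ff j)) v = - DD A (fun j => DD A (Ff j) w) v :=
    hswapneg Ff w v
  have hG2 : DD A (fun j => DD A u (Gg j)) w = - DD A (fun j => DD A (Gg j) u) w :=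
    hswapneg Gg u w
  have hH2 : DD A (fun j => DD A v (Hh j)) u = - DD A (fun j => DD A (Hh j) v) u :=
    hswapneg Hh v u
  have hC : (∑ l : Fin n, DD A (fun j => DD (Function.update A l (Hm (a l) x j)) u v) w)
      + (∑ l : Fin n, DD A (fun j => DD (Function.update A l (Hm (a l) x j)) v w) u)
      + (∑ l : Fin n, DD A (fun j => DD (Function.update A l (Hm (a l) x j)) w u) v) = 0 := by
    rw [← Finset.sum_add_distrib, ← Finset.sum_add_distrib]
    apply Finset.sum_eq_zero
    intro l _
    exact IC A (Hm (a l) x) (Hm_symm (ha l) x) l u v w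
  linear_combination (ρ x) * hIA
    + (ρ x * ρ x) * (hF + hF2 + hG1 + hG2 + hH1 + hH2 + hC)

end final
end NJ


/-- The Nambu-determinant bracket on ℝ^d satisfies the Jacobi identity for every
`d ≥ 2`, i.e. it is a Poisson bracket. -/
theorem nambu_jacobi (d : ℕ) (hd : 2 ≤ d)
    (ρ : (Fin d → ℝ) → ℝ) (a : Fin (d - 2) → (Fin d → ℝ) → ℝ)
    (hρ : ContDiff ℝ (⊤ : ℕ∞) ρ) (ha : ∀ l, ContDiff ℝ (⊤ : ℕ∞) (a l))
    (f g h : (Fin d → ℝ) → ℝ)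
    (hf : ContDiff ℝ (⊤ : ℕ∞) f) (hg : ContDiff ℝ (⊤ : ℕ∞) g) (hh : ContDiff ℝ (⊤ : ℕ∞) h)
    (x : Fin d → ℝ) :
    nambu ρ a (nambu ρ a f g) h x + nambu ρ a (nambu ρ a g h) f x +
      nambu ρ a (nambu ρ a h f) g x = 0 := by
  obtain ⟨n, rfl⟩ : ∃ n, d = n + 2 := ⟨d - 2, by omega⟩
  exact NJ.jacobi_main ρ a hρ ha hf hg hh x
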